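/- Constraint on locality: let s = s(g,a) be a souped-up Lie algebra containing elements a ∈ a and g ∈ g with [g,a] = 1 (the derivation action of g on a applied to a equals the unit of a). Fix any integer N ≥ 1, and let J be the ideal of F(s) generated by all the souped-up generators (i, d, e, qc, qa families as in the souped-up vertex algebra ideal, together with s⟦·,·⟧, a⟦·,·⟧, am⟦·,·,·⟧) and in addition the elements a ∘ₙ g for every n ≥ 1 with n ≠ N (i.e. the locality elements a ∘ₙ g are imposed for all positive n except the single value N). Then 1 ∈ J; hence the locality generators must omit a ∘ₙ g for at least two positive values of n if the quotient is to be nonzero. -/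

import Mathlib

noncomputable section

/-!
Common framework: "infinite free algebras" in the sense of Eller, *Chiral vector bundles*.

An infinite free algebra (completed) is modelled as a topological vector space `F`
over a field `k` of characteristic zero, with a distinguished vector `one` and a
`ℤ`-indexed family of bilinear products `circ n`.  The formal infinite sums provided
by the completion are interpreted by `tsum` (`∑'`).  An ideal is a subspace closed
under all the products (on both sides) and under convergent (formal) infinite sums.
-/

/-- An infinite free algebra (completed). -/
structure IFA (k F : Type) [Field k] [CharZero k] [AddCommGroup F] [Module k F]
    [TopologicalSpace F] where
  /-- the distinguished vector `1` -/
  one : F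
  /-- the products `∘ₙ`; `circ n x y` is `x ∘ₙ y` -/
  circ : ℤ → F → F → F
  circ_add_left : ∀ (n : ℤ) (x x' y : F), circ n (x + x') y = circ n x y + circ n x' y
  circ_add_right : ∀ (n : ℤ) (x y y' : F), circ n x (y + y') = circ n x y + circ n x y'
  circ_smul_left : ∀ (n : ℤ) (c : k) (x y : F), circ n (c • x) y = c • circ n x y
  circ_smul_right : ∀ (n : ℤ) (c : k) (x y : F), circ n x (c • y) = c • circ n x y

namespace IFA

/-- The binomial coefficient `C(m, K)` for `m : ℤ`, `K : ℕ`, as an element of `k`. -/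
def zbinom (k : Type) [Field k] [CharZero k] (m : ℤ) (K : ℕ) : k :=
  (∏ i ∈ Finset.range K, ((m : k) - (i : k))) / (K.factorial : k)

variable {k F : Type} [Field k] [CharZero k] [AddCommGroup F] [Module k F]
  [TopologicalSpace F] (A : IFA k F)

/-- `D x := x ∘₋₂ 1`. -/
def D (x : F) : F := A.circ (-2) x A.one

/-- identity generators `i⟦x;n⟧ := 1ₙx − δ_{n,−1}x` -/
def geni (x : F) (n : ℤ) : F := A.circ n A.one x - (if n = -1 then x else 0)

/-- derivation generators `d⟦x,y;n⟧ := D(xₙy) − (Dx)ₙy − xₙ(Dy)` -/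
def gend (x y : F) (n : ℤ) : F :=
  A.D (A.circ n x y) - A.circ n (A.D x) y - A.circ n x (A.D y)

/-- shift generators `e⟦x,y;n⟧ := (Dx)ₙy + n·x_{n−1}y` -/
def gene (x y : F) (n : ℤ) : F := A.circ n (A.D x) y + (n : k) • A.circ (n - 1) x y

/-- quasi-commutativity generators
`qc⟦x,y;n⟧ := xₙy + Σ_{K≥0}((−1)^{n+K}/K!)·D^K(y_{n+K}x)` -/
def genqc (x y : F) (n : ℤ) : F :=
  A.circ n x y +
    ∑' K : ℕ, (((-1 : k) ^ (n + (K : ℤ))) * ((K.factorial : k)⁻¹)) •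
      (A.D)^[K] (A.circ (n + (K : ℤ)) y x)

/-- quasi-associativity generators
`qa⟦x,y,z;m,n⟧ := (x_my)_nz − Σ_{K≥0} C(m,K)(−1)^K (x_{m−K}(y_{n+K}z) − (−1)^m y_{m+n−K}(x_Kz))` -/
def genqa (x y z : F) (m n : ℤ) : F :=
  A.circ n (A.circ m x y) z -
    ∑' K : ℕ, ((zbinom k m K) * ((-1 : k) ^ K)) •
      (A.circ (m - (K : ℤ)) x (A.circ (n + (K : ℤ)) y z)
        - ((-1 : k) ^ m) • A.circ (m + n - (K : ℤ)) y (A.circ (K : ℤ) x z))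

/-- An ideal of the (completed) infinite free algebra: a subspace closed under all the
products `∘ₙ` by arbitrary elements on both sides, and under the formal (convergent)
infinite sums provided by the completion. -/
def IsIdeal (J : Submodule k F) : Prop :=
  (∀ (n : ℤ) (x y : F), y ∈ J → A.circ n x y ∈ J ∧ A.circ n y x ∈ J) ∧
    (∀ f : ℕ → F, (∀ i, f i ∈ J) → Summable f → (∑' i, f i) ∈ J)

/-- The ideal generated by a set `S ⊆ F`. -/
def idealGenBy (S : Set F) : Submodule k F := sInf {J | A.IsIdeal J ∧ S ⊆ J}

/-- The generators of the vertex algebra ideal other than the locality generators: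
`i⟦x;n⟧, d⟦x,y;n⟧, qc⟦x,y;n⟧` for `n = −1` and all `n ≥ 0`; `qa⟦x,y,z;m,n⟧` for
`m, n ∈ {−1,0,1,2,…}`; and `e⟦x,y;n⟧` for all `n ∈ ℤ`. -/
def baseGens : Set F :=
  {w | ∃ (x : F) (n : ℤ), -1 ≤ n ∧ w = A.geni x n} ∪
  {w | ∃ (x y : F) (n : ℤ), -1 ≤ n ∧ w = A.gend x y n} ∪
  {w | ∃ (x y : F) (n : ℤ), -1 ≤ n ∧ w = A.genqc x y n} ∪
  {w | ∃ (x y z : F) (m n : ℤ), -1 ≤ m ∧ -1 ≤ n ∧ w = A.genqa x y z m n} ∪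
  {w | ∃ (x y : F) (n : ℤ), w = A.gene x y n}

/-- The vertex algebra ideal `I` associated to the locality function `N : F × F → ℕ`:
the ideal generated by the base generators together with the locality elements
`xₙy` for all `x, y ∈ F` and `n ≥ N(x,y)`. -/
def vertexIdeal (N : F → F → ℕ) : Submodule k F :=
  A.idealGenBy
    (A.baseGens ∪ {w | ∃ (x y : F) (n : ℤ), (N x y : ℤ) ≤ n ∧ w = A.circ n x y})

end IFA
/-!
Concrete construction of the (completed) infinite free algebra `F(v)` generated by a
unital vector space `v`: product shapes are binary trees with integer-labelled internal
nodes; the span of the monomials of a fixed shape is the corresponding iterated tensor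
power of `v`; and the completion (allowing formal infinite sums of monomials of pairwise
distinct product shapes) is the direct product over all shapes.  Each shape component
carries the discrete topology and `F(v)` the product topology, so that a family is
summable exactly when every shape component receives only finitely many contributions.
-/

/-- Product shapes: full binary rooted trees with an integer at each internal node. -/
inductive Shape : Type
  | leaf : Shape
  | node : ℤ → Shape → Shape → Shape
  deriving DecidableEq

/-- A bundled `k`-vector space. -/
structure MC (k : Type) [Field k] where
  T : Type
  [grp : AddCommGroup T]
  [mod : Module k T]

attribute [instance] MC.grp MC.mod

variable (k : Type) [Field k] [CharZero k] (V : Type) [AddCommGroup V] [Module k V]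

/-- The space spanned by the monomials of a given product shape (bundled). -/
def monData : Shape → MC k
  | .leaf => MC.mk V
  | .node _ l r => MC.mk (TensorProduct k (monData l).T (monData r).T)

/-- The space spanned by the monomials of a given product shape. -/
abbrev MonSp (s : Shape) : Type := (monData k V s).T

instance (s : Shape) : TopologicalSpace (MonSp k V s) := ⊥

/-- The completed infinite free algebra `F(v)` on the (unital) vector space `v = V`. -/
abbrev FV : Type := ∀ s : Shape, MonSp k V s

/-- The embedding of the generating space `v` into `F(v)` (the length-1 component). -/
def ι (a : V) : FV k V := fun s =>
  match s with
  | .leaf => a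
  | .node _ _ _ => 0

/-- The product `x ∘ₙ y` on `F(v)`. -/
def op (n : ℤ) (x y : FV k V) : FV k V := fun s =>
  match s with
  | .leaf => 0
  | .node m l r => if n = m then TensorProduct.tmul k (x l) (y r) else 0

/-- `F(v)` as an infinite free algebra, with distinguished vector the image of the
distinguished vector `e ∈ v`. -/
def freeIFA (e : V) : IFA k (FV k V) where
  one := ι k V e
  circ := op k V
  circ_add_left := by
    intro n x x' y; funext s
    cases s with
    | leaf => simp [op]
    | node m l r =>
        by_cases h : n = m <;>
          simp [op, h, Pi.add_apply, TensorProduct.add_tmul] <;> rfl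
  circ_add_right := by
    intro n x y y'; funext s
    cases s with
    | leaf => simp [op]
    | node m l r =>
        by_cases h : n = m <;>
          simp [op, h, Pi.add_apply, TensorProduct.tmul_add] <;> rfl
  circ_smul_left := by
    intro n c x y; funext s
    cases s with
    | leaf => simp [op]
    | node m l r =>
        by_cases h : n = m
        · simp [op, h]; exact (TensorProduct.smul_tmul' c (x l) (y r)).symm
        · simp [op, h]
  circ_smul_right := by
    intro n c x y; funext s
    cases s with
    | leaf => simp [op]
    | node m l r =>
        by_cases h : n = m <;>
          simp [op, h, Pi.smul_apply, TensorProduct.tmul_smul] <;> rfl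

/-- The vertex algebra ideal `I(v)` of `F(v)`: generated by the base generators
together with the locality elements `uₙv` for `u, v ∈ v` (the generating space) and
`n ≥ N(u,v)`. -/
def genVertexIdeal (e : V) (N : V → V → ℕ) : Submodule k (FV k V) :=
  (freeIFA k V e).idealGenBy
    ((freeIFA k V e).baseGens ∪
      {w | ∃ (a b : V) (n : ℤ), (N a b : ℤ) ≤ n ∧ w = op k V n (ι k V a) (ι k V b)})
/-!
Souped-up Lie algebras `s = s(g, a)`: an associative commutative unital `k`-algebra `a`
and a `k`-Lie algebra `g` such that `g` is a left `a`-module, `a` is a `g`-module on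
which `g` acts by derivations, compatibly.  The underlying unital vector space of the
semidirect sum `s = g ⊕ a` is modelled as `L × A` with distinguished vector `(0, 1)`.
-/

/-- The action data making `(g, a) = (L, A)` a souped-up Lie algebra: `g` acts on `a`
by derivations, the action is a Lie algebra action, and it is compatible with the
`a`-module structure of `g` in that `[g, a·h] = [g,a]·h + a·[g,h]`. -/
structure SoupAct (k A L : Type) [Field k] [CharZero k] [CommRing A] [Algebra k A]
    [LieRing L] [LieAlgebra k L] [Module A L] [IsScalarTower k A L] where
  act : L →ₗ[k] A →ₗ[k] A
  act_deriv : ∀ (g : L) (a b : A), act g (a * b) = act g a * b + a * act g b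
  act_bracket : ∀ (g h : L) (a : A), act ⁅g, h⁆ a = act g (act h a) - act h (act g a)
  act_smul_bracket : ∀ (g : L) (a : A) (h : L), ⁅g, a • h⁆ = act g a • h + a • ⁅g, h⁆

namespace SoupAct

variable {k A L : Type} [Field k] [CharZero k] [CommRing A] [Algebra k A]
  [LieRing L] [LieAlgebra k L] [Module A L] [IsScalarTower k A L]

/-- The Lie bracket of the semidirect sum Lie algebra `s = g ⊕ a` (`a` abelian):
`[(g,a), (h,b)] = ([g,h], g·b − h·a)`. -/
def sBracket (σ : SoupAct k A L) (p q : L × A) : L × A :=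
  (⁅p.1, q.1⁆, σ.act p.1 q.2 - σ.act q.1 p.2)

end SoupAct

/-- Left multiplication by `a ∈ a` on `s = g ⊕ a`. -/
def aMul {A L : Type} [Mul A] [SMul A L] (c : A) (p : L × A) : L × A :=
  (c • p.1, c * p.2)

/-- The distinguished vector `1 = (0, 1)` of `s`. -/
def sOne (A L : Type) [CommRing A] [LieRing L] : L × A := ((0 : L), (1 : A))

variable (k : Type) [Field k] [CharZero k] (A : Type) [CommRing A] [Algebra k A]
  (L : Type) [LieRing L] [LieAlgebra k L] [Module A L] [IsScalarTower k A L]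

/-- The additional generators of the souped-up vertex algebra ideal:
`s⟦s,t⟧ := s₀t − [s,t]`, `a⟦a,s⟧ := a₋₁s − a·s`, and
`am⟦a,b,x⟧ := (ab)₋₁x − a₋₁(b₋₁x)` (the latter being linear in `x`, it is imposed for
all `x ∈ F(s)`, equivalently for all monomials). -/
def soupGens (σ : SoupAct k A L) : Set (FV k (L × A)) :=
  {w | ∃ p q : L × A,
      w = op k (L × A) 0 (ι k (L × A) p) (ι k (L × A) q) - ι k (L × A) (σ.sBracket p q)} ∪
  {w | ∃ (c : A) (p : L × A),
      w = op k (L × A) (-1) (ι k (L × A) ((0 : L), c)) (ι k (L × A) p)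
            - ι k (L × A) (aMul c p)} ∪
  {w | ∃ (c d : A) (x : FV k (L × A)),
      w = op k (L × A) (-1) (ι k (L × A) ((0 : L), c * d)) x
            - op k (L × A) (-1) (ι k (L × A) ((0 : L), c))
                (op k (L × A) (-1) (ι k (L × A) ((0 : L), d)) x)}

/-- The full generating set of the souped-up vertex algebra ideal `I(s)`. -/
def soupGensAll (σ : SoupAct k A L) (N : (L × A) → (L × A) → ℕ) : Set (FV k (L × A)) :=
  (freeIFA k (L × A) (sOne A L)).baseGens ∪
    {w | ∃ (p q : L × A) (n : ℤ), (N p q : ℤ) ≤ n ∧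
        w = op k (L × A) n (ι k (L × A) p) (ι k (L × A) q)} ∪
    soupGens k A L σ

/-- The souped-up vertex algebra ideal `I(s)` associated to the locality function
`N : s × s → ℕ`. -/
def soupIdeal (σ : SoupAct k A L) (N : (L × A) → (L × A) → ℕ) :
    Submodule k (FV k (L × A)) :=
  (freeIFA k (L × A) (sOne A L)).idealGenBy (soupGensAll k A L σ N)

/-!
Since `a₀g = [a,g] = −1` modulo `J`, it suffices to show `a₀g ∈ J`, and the shift relation
`e⟦a,g;1⟧ = (Da)₁g + a₀g` reduces this to `Da ∈ J`. Quasi-associativity `qa⟦a,a,g;−1,−1⟧`,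
together with `(a₋₁a)₋₁g ≡ a₋₁(a₋₁g)` (from the `a` and `am` relations) and the locality elements
`aₙg` for `n ≥ 1`, `n ≠ N`, yields `Da ≡ a_{−N−2}(a_N g)`. The shift relation
`e⟦a, a_N g; −N−1⟧` turns this into the fixed-point equation `Da ≡ Φ(Da)` with
`Φ ξ = (N+1)⁻¹ ξ_{−N−1}(a_N g)`. Since `Φʳ` only has components on shapes of left depth at
least `r`, the telescoping series `∑ᵣ (Φʳ Da − Φʳ⁺¹ Da)` of elements of `J` converges to `Da` in
the completion, and ideals are closed under such sums.
-/

namespace IFA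

variable {k F : Type} [Field k] [CharZero k] [AddCommGroup F] [Module k F]
  [TopologicalSpace F] {A : IFA k F}

def circₗ (A : IFA k F) (n : ℤ) : F →ₗ[k] F →ₗ[k] F :=
  LinearMap.mk₂ k (A.circ n) (A.circ_add_left n) (A.circ_smul_left n) (A.circ_add_right n)
    (A.circ_smul_right n)

lemma circ_sub_left (n : ℤ) (x x' y : F) :
    A.circ n (x - x') y = A.circ n x y - A.circ n x' y :=
  (A.circₗ n).map_sub₂ x x' y

lemma circ_sub_right (n : ℤ) (x y y' : F) :
    A.circ n x (y - y') = A.circ n x y - A.circ n x y' :=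
  (A.circₗ n x).map_sub y y'

lemma circ_neg_right (n : ℤ) (x y : F) : A.circ n x (-y) = -A.circ n x y :=
  (A.circₗ n x).map_neg y

lemma gene_mem_baseGens (x y : F) (n : ℤ) : A.gene x y n ∈ A.baseGens :=
  Or.inr ⟨x, y, n, rfl⟩

lemma genqa_mem_baseGens (x y z : F) {m n : ℤ} (hm : -1 ≤ m) (hn : -1 ≤ n) :
    A.genqa x y z m n ∈ A.baseGens :=
  Or.inl (Or.inr ⟨x, y, z, m, n, hm, hn, rfl⟩)

lemma zbinom_neg_one (K : ℕ) : zbinom k (-1) K = (-1) ^ K := by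
  have hprod : ∏ i ∈ Finset.range K, ((-1 : k) - i) = (-1) ^ K * K.factorial := by
    induction K with
    | zero => simp
    | succ K ih =>
      rw [Finset.prod_range_succ, ih, Nat.factorial_succ, pow_succ]
      push_cast
      ring
  rw [zbinom, Int.cast_neg, Int.cast_one, hprod, mul_div_assoc,
    div_self (Nat.cast_ne_zero.2 K.factorial_ne_zero), mul_one]

namespace IsIdeal

variable {J : Submodule k F}

lemma circ_mem_of_right (hJ : A.IsIdeal J) (n : ℤ) (x : F) {y : F} (hy : y ∈ J) :
    A.circ n x y ∈ J :=
  (hJ.1 n x y hy).1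

lemma circ_mem_of_left (hJ : A.IsIdeal J) (n : ℤ) {x : F} (hx : x ∈ J) (y : F) :
    A.circ n x y ∈ J :=
  (hJ.1 n y x hx).2

lemma circ_smodEq_left (hJ : A.IsIdeal J) (n : ℤ) {x x' : F} (h : x ≡ x' [SMOD J]) (y : F) :
    A.circ n x y ≡ A.circ n x' y [SMOD J] := by
  rw [SModEq.sub_mem, ← circ_sub_left] at *
  exact hJ.circ_mem_of_left n h y

lemma circ_smodEq_right (hJ : A.IsIdeal J) (n : ℤ) (x : F) {y y' : F} (h : y ≡ y' [SMOD J]) :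
    A.circ n x y ≡ A.circ n x y' [SMOD J] := by
  rw [SModEq.sub_mem, ← circ_sub_right] at *
  exact hJ.circ_mem_of_right n x h

lemma tsum_smodEq_sum [IsTopologicalAddGroup F] [T2Space F] (hJ : A.IsIdeal J)
    {f : ℕ → F} (hf : Summable f) (S : Finset ℕ) (hS : ∀ K ∉ S, f K ∈ J) :
    ∑' K, f K ≡ ∑ K ∈ S, f K [SMOD J] := by
  classical
  set fS : ℕ → F := fun K => if K ∈ S then f K else 0
  have hfS : HasSum fS (∑ K ∈ S, f K) := by
    rw [← Finset.sum_congr rfl fun K hK => if_pos hK]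
    exact hasSum_sum_of_ne_finset_zero fun K hK => if_neg hK
  have htail := hf.hasSum.sub hfS
  have htail_mem : ∀ K, f K - fS K ∈ J := fun K => by
    by_cases hK : K ∈ S
    · simp [fS, hK]
    · simpa [fS, hK] using hS K hK
  rw [SModEq.sub_mem, ← htail.tsum_eq]
  exact hJ.2 _ htail_mem htail.summable

lemma circ_zero_mem_of_D_mem (hJ : A.IsIdeal J) (hbase : A.baseGens ⊆ J) {x : F}
    (hx : A.D x ∈ J) (y : F) : A.circ 0 x y ∈ J := by
  have he := hbase (A.gene_mem_baseGens x y 1)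
  rw [gene, Int.cast_one, one_smul, sub_self] at he
  simpa using J.sub_mem he (hJ.circ_mem_of_left 1 hx y)

end IsIdeal

lemma circ_D_smodEq {J : Submodule k F} (hbase : A.baseGens ⊆ J) (x w : F) (n : ℕ) :
    A.circ (-n - 1) (A.D x) w ≡ ((n : k) + 1) • A.circ (-n - 2) x w [SMOD J] := by
  have he := hbase (A.gene_mem_baseGens x w (-n - 1))
  rw [gene, show (-n - 1 : ℤ) - 1 = -n - 2 by ring, show (((-n - 1 : ℤ)) : k) = -((n : k) + 1) by
    push_cast; ring, neg_smul, ← sub_eq_add_neg] at he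
  exact SModEq.sub_mem.2 he

end IFA

def Shape.leftDepth : Shape → ℕ
  | .leaf => 0
  | .node _ l _ => l.leftDepth + 1

section FreeAlgebra

variable {k V : Type} [Field k] [AddCommGroup V] [Module k V]

instance (s : Shape) : DiscreteTopology (MonSp k V s) := ⟨rfl⟩

@[simp]
lemma freeIFA_circ [CharZero k] (e : V) : (freeIFA k V e).circ = op k V := rfl

lemma op_apply_node (n m : ℤ) (l r : Shape) (x y : FV k V) :
    op k V n x y (.node m l r) = if n = m then x l ⊗ₜ[k] y r else 0 :=
  rfl

lemma ι_neg (p : V) : ι k V (-p) = -ι k V p := by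
  funext s
  cases s
  · rfl
  · exact neg_zero.symm

/-- The `K`-th term only contributes to shapes with root label `n - K`. -/
lemma summable_op_sub (n : ℤ) (x y : ℕ → FV k V) :
    Summable fun K : ℕ => op k V (n - K) (x K) (y K) := by
  refine Pi.summable.2 fun s => ?_
  cases s with
  | leaf => exact summable_zero
  | node m l r =>
    refine summable_of_ne_finset_zero (s := {(n - m).toNat}) fun K hK => if_neg ?_
    rw [Finset.mem_singleton] at hK
    omega

lemma freeIFA_genqa_neg_one [CharZero k] (e : V) (x y z : FV k V) :
    (freeIFA k V e).genqa x y z (-1) (-1) = op k V (-1) (op k V (-1) x y) z -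
      (∑' K : ℕ, op k V (-1 - K) x (op k V (-1 + K) y z) +
        ∑' K : ℕ, op k V (-2 - K) y (op k V K x z)) := by
  rw [IFA.genqa, ← (summable_op_sub _ _ _).tsum_add (summable_op_sub _ _ _)]
  congr 2
  funext K
  rw [IFA.zbinom_neg_one, ← mul_pow, neg_mul_neg, one_mul, one_pow, one_smul, zpow_neg_one,
    inv_neg_one, neg_one_smul, sub_neg_eq_add, show (-1 : ℤ) + -1 - K = -2 - K by ring]
  rfl

lemma iterate_op_apply_eq_zero (m : ℤ) (w x : FV k V) {r : ℕ} {s : Shape}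
    (h : s.leftDepth < r) : ((op k V m · w)^[r] x) s = 0 := by
  induction r generalizing s with
  | zero => omega
  | succ r ih =>
    rw [Function.iterate_succ_apply']
    cases s with
    | leaf => rfl
    | node m' l r' =>
      have hl : l.leftDepth < r := by
        simp only [Shape.leftDepth] at h
        omega
      rw [op_apply_node]
      split_ifs
      · rw [ih hl]
        exact TensorProduct.zero_tmul _ _
      · rfl

lemma hasSum_iterate_op_sub (m : ℤ) (w x : FV k V) :
    HasSum (fun r => (op k V m · w)^[r] x - (op k V m · w)^[r + 1] x) x := by
  refine Pi.hasSum.2 fun s => ?_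
  have hvanish : ∀ r, s.leftDepth < r → ((op k V m · w)^[r] x) s = 0 :=
    fun r => iterate_op_apply_eq_zero m w x
  have hfin : HasSum (fun r => ((op k V m · w)^[r] x - (op k V m · w)^[r + 1] x) s)
      (∑ r ∈ Finset.range (s.leftDepth + 1),
        ((op k V m · w)^[r] x - (op k V m · w)^[r + 1] x) s) :=
    hasSum_sum_of_ne_finset_zero fun r hr => by
      rw [Finset.mem_range] at hr
      rw [Pi.sub_apply, hvanish r (by omega), hvanish (r + 1) (by omega), sub_zero]
  simp only [Pi.sub_apply] at hfin ⊢
  rwa [Finset.sum_range_sub', hvanish (s.leftDepth + 1) (by omega), sub_zero,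
    Function.iterate_zero_apply] at hfin

lemma IFA.IsIdeal.mem_of_smodEq_op [CharZero k] {e : V} {J : Submodule k (FV k V)}
    (hJ : (freeIFA k V e).IsIdeal J) {m : ℤ} {x w : FV k V}
    (h : x ≡ op k V m x w [SMOD J]) : x ∈ J := by
  have hterm : ∀ r, (op k V m · w)^[r] x - (op k V m · w)^[r + 1] x ∈ J := by
    intro r
    induction r with
    | zero => exact SModEq.sub_mem.1 h
    | succ r ih =>
      have := hJ.circ_mem_of_left m ih w
      rw [IFA.circ_sub_left] at this
      simpa only [Function.iterate_succ_apply', freeIFA_circ] using this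
  have hsum := hasSum_iterate_op_sub m w x
  rw [← hsum.tsum_eq]
  exact hJ.2 _ hterm hsum.summable

lemma IFA.IsIdeal.D_mem_of_D_smodEq_op [CharZero k] {e : V} {J : Submodule k (FV k V)}
    (hJ : (freeIFA k V e).IsIdeal J) (hbase : (freeIFA k V e).baseGens ⊆ J) {x w : FV k V}
    {n : ℕ} (h : (freeIFA k V e).D x ≡ op k V (-n - 2) x w [SMOD J]) :
    (freeIFA k V e).D x ∈ J := by
  have hn : (n : k) + 1 ≠ 0 := by exact_mod_cast n.succ_ne_zero
  refine hJ.mem_of_smodEq_op (m := -n - 1) (w := ((n : k) + 1)⁻¹ • w) ?_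
  calc (freeIFA k V e).D x
      ≡ ((n : k) + 1)⁻¹ • ((n : k) + 1) • op k V (-n - 2) x w [SMOD J] := by
        rwa [smul_smul, inv_mul_cancel₀ hn, one_smul]
    _ ≡ ((n : k) + 1)⁻¹ • op k V (-n - 1) ((freeIFA k V e).D x) w [SMOD J] :=
        ((IFA.circ_D_smodEq hbase x w n).symm.smul _)
    _ = op k V (-n - 1) ((freeIFA k V e).D x) (((n : k) + 1)⁻¹ • w) :=
        ((freeIFA k V e).circ_smul_right _ _ _ _).symm

end FreeAlgebra

section SoupedUp

variable {k A L : Type} [Field k] [CharZero k] [CommRing A] [Algebra k A] [LieRing L]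
  [LieAlgebra k L] [Module A L] [IsScalarTower k A L] {σ : SoupAct k A L}
  {J : Submodule k (FV k (L × A))}

lemma op_zero_smodEq_neg_one (hsoup : soupGens k A L σ ⊆ J) {a : A} {g : L}
    (hga : σ.act g a = 1) :
    op k (L × A) 0 (ι k (L × A) (0, a)) (ι k (L × A) (g, 0)) ≡ -ι k (L × A) (sOne A L)
      [SMOD J] := by
  have hs := hsoup (Or.inl (Or.inl ⟨(0, a), (g, 0), rfl⟩))
  have hbracket : σ.sBracket (0, a) (g, 0) = -sOne A L := by
    simp [SoupAct.sBracket, sOne, hga]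
  rw [hbracket, ι_neg] at hs
  exact SModEq.sub_mem.2 hs

lemma op_neg_one_assoc_smodEq (hJ : (freeIFA k (L × A) (sOne A L)).IsIdeal J)
    (hsoup : soupGens k A L σ ⊆ J) (c : A) (x : FV k (L × A)) :
    op k (L × A) (-1) (op k (L × A) (-1) (ι k (L × A) (0, c)) (ι k (L × A) (0, c))) x ≡
      op k (L × A) (-1) (ι k (L × A) (0, c)) (op k (L × A) (-1) (ι k (L × A) (0, c)) x)
      [SMOD J] := by
  have hsq : op k (L × A) (-1) (ι k (L × A) (0, c)) (ι k (L × A) (0, c)) ≡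
      ι k (L × A) (0, c * c) [SMOD J] := by
    have hs := hsoup (Or.inl (Or.inr ⟨c, (0, c), rfl⟩))
    rw [show aMul c ((0 : L), c) = (0, c * c) by simp [aMul]] at hs
    exact SModEq.sub_mem.2 hs
  exact (hJ.circ_smodEq_left (-1) hsq x).trans
    (SModEq.sub_mem.2 (hsoup (Or.inr ⟨c, c, x, rfl⟩)))

/-- The quasi-associativity generator `qa⟦a,a,g;−1,−1⟧`, read modulo the locality elements, leaves
only five terms: `a₋₁(a₋₁g)`, twice `a₋₂(a₀g) ≡ −Da`, and twice `a_{−N−2}(a_N g)`. -/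
lemma D_smodEq_op (hJ : (freeIFA k (L × A) (sOne A L)).IsIdeal J)
    (hbase : (freeIFA k (L × A) (sOne A L)).baseGens ⊆ J) (hsoup : soupGens k A L σ ⊆ J)
    {a : A} {g : L} (hga : σ.act g a = 1) {N : ℕ} (hN : 1 ≤ N)
    (hloc : ∀ n : ℤ, 1 ≤ n → n ≠ N →
      op k (L × A) n (ι k (L × A) (0, a)) (ι k (L × A) (g, 0)) ∈ J) :
    (freeIFA k (L × A) (sOne A L)).D (ι k (L × A) (0, a)) ≡
      op k (L × A) (-N - 2) (ι k (L × A) (0, a))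
        (op k (L × A) N (ι k (L × A) (0, a)) (ι k (L × A) (g, 0))) [SMOD J] := by
  set x := ι k (L × A) ((0 : L), a)
  set y := ι k (L × A) (g, (0 : A))
  set X := op k (L × A) (-2) x (op k (L × A) 0 x y)
  set u := op k (L × A) (-N - 2) x (op k (L × A) N x y)
  have hqa : op k (L × A) (-1) (op k (L × A) (-1) x x) y ≡
      ∑' K : ℕ, op k (L × A) (-1 - K) x (op k (L × A) (-1 + K) x y) +
        ∑' K : ℕ, op k (L × A) (-2 - K) x (op k (L × A) K x y) [SMOD J] := by
    have hgen := hbase (IFA.genqa_mem_baseGens x x y le_rfl le_rfl)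
    rw [freeIFA_genqa_neg_one] at hgen
    exact SModEq.sub_mem.2 hgen
  have hT1 : ∑' K : ℕ, op k (L × A) (-1 - K) x (op k (L × A) (-1 + K) x y) ≡
      op k (L × A) (-1) x (op k (L × A) (-1) x y) + (X + u) [SMOD J] := by
    refine (hJ.tsum_smodEq_sum (summable_op_sub _ _ _) {0, 1, N + 1} fun K hK =>
      hJ.circ_mem_of_right _ _ (hloc _ ?_ ?_)).trans ?_
    · simp only [Finset.mem_insert, Finset.mem_singleton] at hK
      omega
    · simp only [Finset.mem_insert, Finset.mem_singleton] at hK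
      omega
    · rw [Finset.sum_insert (by simp), Finset.sum_insert (by simp; omega), Finset.sum_singleton,
        Nat.cast_zero, Nat.cast_one, sub_zero, add_zero, show (-1 : ℤ) - 1 = -2 by norm_num,
        show (-1 : ℤ) + 1 = 0 by norm_num, show (-1 : ℤ) - ((N + 1 : ℕ) : ℤ) = -N - 2 by
        push_cast; ring, show (-1 : ℤ) + ((N + 1 : ℕ) : ℤ) = N by push_cast; ring]
  have hT2 : ∑' K : ℕ, op k (L × A) (-2 - K) x (op k (L × A) K x y) ≡ X + u [SMOD J] := by
    refine (hJ.tsum_smodEq_sum (summable_op_sub _ _ _) {0, N} fun K hK =>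
      hJ.circ_mem_of_right _ _ (hloc _ ?_ ?_)).trans ?_
    · simp only [Finset.mem_insert, Finset.mem_singleton] at hK
      omega
    · simp only [Finset.mem_insert, Finset.mem_singleton] at hK
      omega
    · rw [Finset.sum_insert (by simp; omega), Finset.sum_singleton, Nat.cast_zero, sub_zero,
        show (-2 : ℤ) - N = -N - 2 by ring]
  have hX : X ≡ -(freeIFA k (L × A) (sOne A L)).D x [SMOD J] := by
    have h := hJ.circ_smodEq_right (-2) x (op_zero_smodEq_neg_one hsoup hga)
    rwa [IFA.circ_neg_right] at h
  have hassoc := op_neg_one_assoc_smodEq hJ hsoup a y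
  simp only [SModEq.def, Submodule.Quotient.mk_add, Submodule.Quotient.mk_neg] at *
  linear_combination (norm := module) (2⁻¹ : k) • (hqa - hassoc + hT1 + hT2) + hX

end SoupedUp

theorem statement13_general (k : Type) [Field k] [CharZero k] (A : Type) [CommRing A]
    [Algebra k A] (L : Type) [LieRing L] [LieAlgebra k L] [Module A L]
    [IsScalarTower k A L] (σ : SoupAct k A L)
    (a : A) (g : L) (hga : σ.act g a = 1) (N : ℕ) (hN : 1 ≤ N) :
    ι k (L × A) (sOne A L) ∈
      (freeIFA k (L × A) (sOne A L)).idealGenBy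
        ((freeIFA k (L × A) (sOne A L)).baseGens ∪ soupGens k A L σ ∪
          {w | ∃ n : ℤ, 1 ≤ n ∧ n ≠ (N : ℤ) ∧
            w = op k (L × A) n (ι k (L × A) ((0 : L), a))
                  (ι k (L × A) (g, (0 : A)))}) := by
  refine Submodule.mem_sInf.2 fun J ⟨hJ, hS⟩ => ?_
  obtain ⟨hgens, hloc⟩ := Set.union_subset_iff.1 hS
  obtain ⟨hbase, hsoup⟩ := Set.union_subset_iff.1 hgens
  have hD := hJ.D_mem_of_D_smodEq_op hbase <|
    D_smodEq_op hJ hbase hsoup hga hN fun n h1 h2 => hloc ⟨n, h1, h2, rfl⟩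
  have ha₀g := hJ.circ_zero_mem_of_D_mem hbase hD (ι k (L × A) (g, 0))
  have hneg_one := (op_zero_smodEq_neg_one hsoup hga).symm.trans (SModEq.zero.2 ha₀g)
  exact neg_mem_iff.1 (SModEq.zero.1 hneg_one)

/-- **constraint on locality.** Let `s = s(g,a)` contain `a ∈ a`,
`g ∈ g` with `[g,a] = 1`.  Fix `N ≥ 1` and let `J` be the ideal generated by all the
souped-up generators (the `i`, `d`, `qc`, `qa`, `e` families together with the `s`,
`a`, `am` generators), plus the locality elements `a ∘ₙ g` for every `n ≥ 1` with
`n ≠ N`.  Then `1 ∈ J`; hence the locality generators must omit `a ∘ₙ g` for at least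
two positive values of `n` if the quotient is to be nonzero. -/
theorem statement13 (k : Type) [Field k] [CharZero k] (A : Type) [CommRing A]
    [Algebra k A] [Nontrivial A] (L : Type) [LieRing L] [LieAlgebra k L] [Module A L]
    [IsScalarTower k A L] (σ : SoupAct k A L)
    (a : A) (g : L) (hga : σ.act g a = 1) (N : ℕ) (hN : 1 ≤ N) :
    ι k (L × A) (sOne A L) ∈
      (freeIFA k (L × A) (sOne A L)).idealGenBy
        ((freeIFA k (L × A) (sOne A L)).baseGens ∪ soupGens k A L σ ∪
          {w | ∃ n : ℤ, 1 ≤ n ∧ n ≠ (N : ℤ) ∧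
            w = op k (L × A) n (ι k (L × A) ((0 : L), a))
                  (ι k (L × A) (g, (0 : A)))}) :=
  statement13_general k A L σ a g hga N hN
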